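/- Let (X,τ) be a compact Hausdorff space and d a semi metric on X with τ_d weaker than τ. Let ρ be the semi metric on the state space S(C(X,ℂ)) given by ρ(μ,ν) = sup{ |μ(a) − ν(a)| : a ∈ C(X,ℂ), |a(p) − a(q)| ≤ d(p,q) for all p,q ∈ X }, and for b ∈ C(X,ℂ) let L_ρ(b) = sup{ |μ(b) − ν(b)|/ρ(μ,ν) : μ,ν ∈ S(C(X,ℂ)), ρ(μ,ν) ≠ 0 } ∈ [0,∞]. Then for every b ∈ C(X,ℂ) that is also continuous with respect to τ_d, L_ρ(b) = ‖b‖_d, where ‖b‖_d is the Lipschitz seminorm of b with respect to d (equality in [0,∞]). -/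

import Mathlib

open scoped ENNReal

noncomputable section

variable {X : Type*} [TopologicalSpace X]

/-- A state on the C*-algebra `C(X, ℂ)`: a continuous linear functional sending the unit to `1`
and taking nonnegative real values on positive elements `star a * a`. -/
def IsState (φ : C(X, ℂ) →L[ℂ] ℂ) : Prop :=
  φ 1 = 1 ∧ ∀ a : C(X, ℂ), 0 ≤ (φ (star a * a)).re ∧ (φ (star a * a)).im = 0

/-- The Monge–Kantorovich semi metric `ρ` on functionals on `C(X, ℂ)` associated with a semi
metric `d` on `X`: `ρ(μ, ν) = sup { |μ a - ν a| : a ∈ C(X, ℂ), |a p - a q| ≤ d p q ∀ p q }`,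
with values in `[0, ∞]`. -/
def rho (d : X → X → ℝ) (μ ν : C(X, ℂ) →L[ℂ] ℂ) : ℝ≥0∞ :=
  ⨆ a ∈ {a : C(X, ℂ) | ∀ p q : X, ‖a p - a q‖ ≤ d p q}, (‖μ a - ν a‖₊ : ℝ≥0∞)

/-- The Lipschitz-type seminorm `L_ρ` on `C(X, ℂ)` induced by the semi metric `ρ` on the state
space: `L_ρ(b) = sup { |μ b - ν b| / ρ(μ, ν) : μ, ν states, ρ(μ, ν) ≠ 0 } ∈ [0, ∞]`. -/
def Lrho (d : X → X → ℝ) (b : C(X, ℂ)) : ℝ≥0∞ :=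
  ⨆ (μ : {φ : C(X, ℂ) →L[ℂ] ℂ // IsState φ}) (ν : {φ : C(X, ℂ) →L[ℂ] ℂ // IsState φ})
    (_ : rho d μ.1 ν.1 ≠ 0), (‖μ.1 b - ν.1 b‖₊ : ℝ≥0∞) / rho d μ.1 ν.1

/-- The Lipschitz seminorm `‖b‖_d` of `b : C(X, ℂ)` with respect to a semi metric `d` on `X`,
with values in `[0, ∞]`. -/
def lipSeminorm (d : X → X → ℝ) (b : C(X, ℂ)) : ℝ≥0∞ :=
  ⨆ (x : X) (y : X) (_ : d x y ≠ 0), (‖b x - b y‖₊ : ℝ≥0∞) / ENNReal.ofReal (d x y)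

/-! Point evaluations `δ_x` are states, and `ρ(δ_x, δ_y) = d x y`: the supremum is attained at
`d x ·`, which is `d`-Lipschitz by the triangle inequality and continuous because `τ_d` is weaker
than `τ`. Hence `‖b‖_d ≤ L_ρ(b)`. Conversely, if `b` is `K`-Lipschitz with `K > 0` then `b / K` is
admissible in the supremum defining `ρ`, so `|μ b - ν b| ≤ K ρ(μ, ν)` for all functionals. Since
`b` is `τ_d`-continuous it is constant on pairs at distance `0`, so it is `(‖b‖_d + ε)`-Lipschitz
for every `ε > 0`, which gives `L_ρ(b) ≤ ‖b‖_d`. -/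

open scoped NNReal

section SemiMetric

variable {α : Type*} {d : α → α → ℝ}

lemma abs_sub_le_of_triangle (d_symm : ∀ x y, d x y = d y x)
    (d_triangle : ∀ x y z, d x z ≤ d x y + d y z) (x p q : α) :
    |d x p - d x q| ≤ d p q := by
  rw [abs_sub_le_iff]
  constructor <;> linarith [d_triangle x q p, d_triangle x p q, d_symm q p]

lemma apply_eq_apply_of_semimetric_eq_zero {E : Type*} [NormedAddCommGroup E] {f : α → E}
    (hf : ∀ (x : α) (ε : ℝ), 0 < ε → ∃ δ > 0, ∀ y : α, d y x < δ → ‖f y - f x‖ < ε)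
    {p q : α} (hpq : d p q = 0) : f p = f q := by
  by_contra hne
  obtain ⟨δ, hδ, hδf⟩ := hf q _ (norm_pos_iff.2 (sub_ne_zero.2 hne))
  exact lt_irrefl _ (hδf p (hpq ▸ hδ))

end SemiMetric

section StateSpace

variable {d : X → X → ℝ}

lemma continuous_semimetric_left (d_symm : ∀ x y, d x y = d y x)
    (d_triangle : ∀ x y z, d x z ≤ d x y + d y z)
    (hweaker : ∀ (x : X) (ε : ℝ), 0 < ε → ∃ U : Set X, IsOpen U ∧ x ∈ U ∧ ∀ y ∈ U, d x y < ε)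
    (x : X) : Continuous (d x) := by
  refine continuous_iff_continuousAt.2 fun p => Metric.tendsto_nhds.2 fun ε hε => ?_
  obtain ⟨U, hU, hpU, hUd⟩ := hweaker p ε hε
  filter_upwards [hU.mem_nhds hpU] with q hq
  rw [Real.dist_eq, abs_sub_comm]
  exact (abs_sub_le_of_triangle d_symm d_triangle x p q).trans_lt (hUd q hq)

lemma isState_evalCLM (x : X) : IsState (ContinuousMap.evalCLM (R := ℂ) x) := by
  refine ⟨rfl, fun a => ?_⟩
  simp only [ContinuousMap.evalCLM_apply, ContinuousMap.mul_apply, ContinuousMap.star_apply]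
  rw [Complex.star_def, ← Complex.normSq_eq_conj_mul_self]
  exact ⟨Complex.normSq_nonneg _, rfl⟩

lemma rho_evalCLM_le (x y : X) :
    rho d (ContinuousMap.evalCLM (R := ℂ) x) (ContinuousMap.evalCLM (R := ℂ) y) ≤
      ENNReal.ofReal (d x y) :=
  iSup₂_le fun a ha => by
    rw [← enorm_eq_nnnorm, ← ofReal_norm]
    exact ENNReal.ofReal_le_ofReal (ha x y)

lemma rho_evalCLM (d_nonneg : ∀ x y, 0 ≤ d x y) (d_refl : ∀ x, d x x = 0)
    (d_symm : ∀ x y, d x y = d y x) (d_triangle : ∀ x y z, d x z ≤ d x y + d y z)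
    (hweaker : ∀ (x : X) (ε : ℝ), 0 < ε → ∃ U : Set X, IsOpen U ∧ x ∈ U ∧ ∀ y ∈ U, d x y < ε)
    (x y : X) :
    rho d (ContinuousMap.evalCLM (R := ℂ) x) (ContinuousMap.evalCLM (R := ℂ) y) =
      ENNReal.ofReal (d x y) := by
  refine le_antisymm (rho_evalCLM_le x y) ?_
  let a : C(X, ℂ) := ⟨fun p => (d x p : ℂ),
    Complex.continuous_ofReal.comp (continuous_semimetric_left d_symm d_triangle hweaker x)⟩
  have ha : ∀ p q, ‖a p - a q‖ ≤ d p q := fun p q => by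
    simpa [a, ← Complex.ofReal_sub] using abs_sub_le_of_triangle d_symm d_triangle x p q
  refine le_iSup₂_of_le a ha ?_
  simp [a, d_refl, ← enorm_eq_nnnorm, ← ofReal_norm, abs_of_nonneg (d_nonneg x y)]

lemma div_rho_le_Lrho {μ ν : C(X, ℂ) →L[ℂ] ℂ} (hμ : IsState μ) (hν : IsState ν)
    (hρ : rho d μ ν ≠ 0) (b : C(X, ℂ)) : (‖μ b - ν b‖₊ : ℝ≥0∞) / rho d μ ν ≤ Lrho d b := by
  rw [Lrho]
  exact le_iSup₂_of_le ⟨μ, hμ⟩ ⟨ν, hν⟩ (le_iSup_of_le hρ le_rfl)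

lemma nnnorm_sub_le_mul_rho {b : C(X, ℂ)} {K : ℝ≥0} (hK : K ≠ 0)
    (hb : ∀ p q, ‖b p - b q‖ ≤ K * d p q) (μ ν : C(X, ℂ) →L[ℂ] ℂ) :
    (‖μ b - ν b‖₊ : ℝ≥0∞) ≤ K * rho d μ ν := by
  set c : ℂ := ((K⁻¹ : ℝ≥0) : ℂ)
  have hc : ‖c‖₊ = K⁻¹ := by simp [c]
  have hmem : ∀ p q, ‖(c • b) p - (c • b) q‖ ≤ d p q := fun p q => by
    rw [ContinuousMap.smul_apply, ContinuousMap.smul_apply, ← smul_sub, norm_smul,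
      ← coe_nnnorm c, hc, NNReal.coe_inv, inv_mul_le_iff₀ (by positivity)]
    exact hb p q
  have hρ : (‖μ (c • b) - ν (c • b)‖₊ : ℝ≥0∞) ≤ rho d μ ν := le_iSup₂_of_le (c • b) hmem le_rfl
  rwa [map_smul, map_smul, ← smul_sub, nnnorm_smul, hc, ENNReal.coe_mul,
    ENNReal.coe_inv hK, ENNReal.inv_mul_le_iff (by simpa) ENNReal.coe_ne_top] at hρ

lemma norm_sub_le_of_lipSeminorm_le (d_nonneg : ∀ x y, 0 ≤ d x y) {b : C(X, ℂ)}
    (hb : ∀ p q, d p q = 0 → b p = b q) {K : ℝ≥0} (hK : lipSeminorm d b ≤ K) (p q : X) :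
    ‖b p - b q‖ ≤ K * d p q := by
  rcases eq_or_ne (d p q) 0 with hpq | hpq
  · simp [hb p q hpq, hpq]
  have hdiv : (‖b p - b q‖₊ : ℝ≥0∞) / ENNReal.ofReal (d p q) ≤ K :=
    (le_iSup₂_of_le p q (le_iSup (fun _ : d p q ≠ 0 => _) hpq)).trans hK
  rwa [ENNReal.div_le_iff (by simpa using (d_nonneg p q).lt_of_ne' hpq) ENNReal.ofReal_ne_top,
    ← enorm_eq_nnnorm, ← ofReal_norm, ← ENNReal.ofReal_coe_nnreal,
    ← ENNReal.ofReal_mul K.coe_nonneg,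
    ENNReal.ofReal_le_ofReal_iff (mul_nonneg K.coe_nonneg (d_nonneg p q))] at hdiv

lemma nnnorm_sub_div_rho_le_lipSeminorm (d_nonneg : ∀ x y, 0 ≤ d x y) {b : C(X, ℂ)}
    (hb : ∀ p q, d p q = 0 → b p = b q) (μ ν : C(X, ℂ) →L[ℂ] ℂ) :
    (‖μ b - ν b‖₊ : ℝ≥0∞) / rho d μ ν ≤ lipSeminorm d b := by
  -- `nnnorm_sub_le_mul_rho` needs a nonzero constant, so use `‖b‖_d + ε`.
  refine ENNReal.le_of_forall_pos_le_add fun ε hε hL => ?_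
  have hK : lipSeminorm d b ≤ ↑((lipSeminorm d b).toNNReal + ε) := by
    rw [ENNReal.coe_add, ENNReal.coe_toNNReal hL.ne]
    exact le_self_add
  have := nnnorm_sub_le_mul_rho (add_pos_of_nonneg_of_pos zero_le hε).ne'
    (norm_sub_le_of_lipSeminorm_le d_nonneg hb hK) μ ν
  rw [ENNReal.coe_add, ENNReal.coe_toNNReal hL.ne] at this
  exact ENNReal.div_le_of_le_mul this

end StateSpace

theorem Lrho_eq_lipSeminorm_general (d : X → X → ℝ)
    (d_nonneg : ∀ x y, 0 ≤ d x y)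
    (d_refl : ∀ x, d x x = 0)
    (d_symm : ∀ x y, d x y = d y x)
    (d_triangle : ∀ x y z, d x z ≤ d x y + d y z)
    (hweaker : ∀ (x : X) (ε : ℝ), 0 < ε →
      ∃ U : Set X, IsOpen U ∧ x ∈ U ∧ ∀ y ∈ U, d x y < ε)
    (b : C(X, ℂ))
    (hbd : ∀ (x : X) (ε : ℝ), 0 < ε → ∃ δ > 0, ∀ y : X, d y x < δ → ‖b y - b x‖ < ε) :
    Lrho d b = lipSeminorm d b := by
  have hb : ∀ p q, d p q = 0 → b p = b q := fun _ _ => apply_eq_apply_of_semimetric_eq_zero hbd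
  refine le_antisymm (iSup₂_le fun μ ν => iSup_le fun _ =>
    nnnorm_sub_div_rho_le_lipSeminorm d_nonneg hb μ ν) (iSup₂_le fun x y => iSup_le fun hxy => ?_)
  have hρ := rho_evalCLM d_nonneg d_refl d_symm d_triangle hweaker x y
  have hρ0 : rho d (ContinuousMap.evalCLM (R := ℂ) x) (ContinuousMap.evalCLM (R := ℂ) y) ≠ 0 := by
    simpa [hρ] using (d_nonneg x y).lt_of_ne' hxy
  rw [← hρ]
  exact div_rho_le_Lrho (isState_evalCLM x) (isState_evalCLM y) hρ0 b

/-- Let `(X, τ)` be compact Hausdorff and `d` a semi metric on `X` whose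
induced topology is weaker than `τ`.  Then for every `b ∈ C(X, ℂ)` that is moreover continuous
with respect to the topology induced by `d`, the seminorm `L_ρ(b)` defined from the
Monge–Kantorovich semi metric `ρ` on the state space equals the Lipschitz seminorm `‖b‖_d`
(equality in `[0, ∞]`). -/
theorem Lrho_eq_lipSeminorm [CompactSpace X] [T2Space X] (d : X → X → ℝ)
    (d_nonneg : ∀ x y, 0 ≤ d x y)
    (d_refl : ∀ x, d x x = 0)
    (d_symm : ∀ x y, d x y = d y x)
    (d_triangle : ∀ x y z, d x z ≤ d x y + d y z)
    (hweaker : ∀ (x : X) (ε : ℝ), 0 < ε →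
      ∃ U : Set X, IsOpen U ∧ x ∈ U ∧ ∀ y ∈ U, d x y < ε)
    (b : C(X, ℂ))
    (hbd : ∀ (x : X) (ε : ℝ), 0 < ε → ∃ δ > 0, ∀ y : X, d y x < δ → ‖b y - b x‖ < ε) :
    Lrho d b = lipSeminorm d b :=
  Lrho_eq_lipSeminorm_general d d_nonneg d_refl d_symm d_triangle hweaker b hbd

end
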